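/- arXiv:2310.19116 — 5 statements merged into one kernel-verified Lean document; each statement's English description precedes it below -/
import Mathlib

section
/- Let J, K be 2×2 real matrices with K = [[κ₁, κ̄],[κ̄, κ₂]], κ₁,κ₂ > 0, satisfying the current symmetry J₂₁κ₁ − J₁₂κ₂ = (J₁₁−J₂₂)κ̄, with J₂₁ ≠ 0 and positive discriminant θ² + 4J₁₂J₂₁ > 0 where θ = J₁₁−J₂₂. Define δ as the signed square root of the discriminant, u₊ = (δ−θ)/(2J₂₁), u₋ = −u₊J₂₁/J₁₂ (interpreted via the quadratic relation J₂₁u₊² + θu₊ − J₁₂ = 0), z₊² = κ₁ + 2u₊κ̄ + u₊²κ₂, z₋² = u₋²κ₁ + 2u₋κ̄ + κ₂, v = 1 − u₊u₋, and R = [[1/z₊, u₊/z₊],[u₋/z₋, 1/z₋]]. Then R K Rᵀ = 𝟙 (the 2×2 identity matrix). -/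
/-! The rows `(1, u₊)` and `(u₋, 1)` of `R` are, up to scaling, left eigenvectors of `J`: `u₊` is a root
of `J₂₁ u² + θ u - J₁₂`, and `u₋ = -J₂₁ u₊ / J₁₂` then solves the companion equation. The current symmetry
says exactly that `J K` is symmetric, so left eigenvectors of `J` are `K`-orthogonal, which kills the
off-diagonal entries of `R K Rᵀ`; the diagonal entries are `1` by the choice of `z₊`, `z₋`. -/

open Matrix

theorem Matrix.fin_two_mul_mul_transpose {α : Type*} [CommRing α] (a b c d k₁ k₂ kb : α) :
    !![a, b; c, d] * !![k₁, kb; kb, k₂] * !![a, b; c, d]ᵀ =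
      !![a * a * k₁ + 2 * a * b * kb + b * b * k₂, a * c * k₁ + (a * d + b * c) * kb + b * d * k₂;
        a * c * k₁ + (a * d + b * c) * kb + b * d * k₂, c * c * k₁ + 2 * c * d * kb + d * d * k₂] := by
  have ht : !![a, b; c, d]ᵀ = !![a, c; b, d] := by
    ext i j
    fin_cases i <;> fin_cases j <;> rfl
  rw [ht, mul_fin_two, mul_fin_two]
  congr 1
  simp only [vecCons_inj, and_true]
  refine ⟨⟨?_, ?_⟩, ?_, ?_⟩ <;> ring

theorem eigenrows_orthogonal_of_current_symmetry {α : Type*} [CommRing α] [NoZeroDivisors α]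
    {J₁₂ J₂₁ θ κ₁ κ₂ κb u v : α} (hJ₁₂ : J₁₂ ≠ 0)
    (hsym : J₂₁ * κ₁ - J₁₂ * κ₂ = θ * κb) (hu : J₂₁ * (u * u) + θ * u + -J₁₂ = 0)
    (hv : J₁₂ * v = -(J₂₁ * u)) :
    v * κ₁ + (1 + u * v) * κb + u * κ₂ = 0 := by
  have h : J₁₂ * (v * κ₁ + (1 + u * v) * κb + u * κ₂) = 0 := by
    linear_combination (κ₁ + u * κb) * hv - u * hsym - κb * hu
  exact (mul_eq_zero.mp h).resolve_left hJ₁₂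

theorem stmt_5_general (J11 J12 J21 J22 κ₁ κ₂ κb θ δ uP uM zP zM : ℝ)
    (hsym : J21 * κ₁ - J12 * κ₂ = (J11 - J22) * κb)
    (hJ21 : J21 ≠ 0) (hJ12 : J12 ≠ 0)
    (hθ : θ = J11 - J22)
    (hδ : δ^2 = θ^2 + 4 * J12 * J21)
    (huP : uP = (δ - θ) / (2 * J21))
    (huM : uM = -(J21 / J12) * uP)
    (hzPpos : 0 < zP) (hzMpos : 0 < zM)
    (hzP : zP^2 = κ₁ + 2 * uP * κb + uP^2 * κ₂)
    (hzM : zM^2 = uM^2 * κ₁ + 2 * uM * κb + κ₂) :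
    !![1/zP, uP/zP; uM/zM, 1/zM] * !![κ₁, κb; κb, κ₂] *
      (!![1/zP, uP/zP; uM/zM, 1/zM])ᵀ = 1 := by
  have hroot : J21 * (uP * uP) + θ * uP + -J12 = 0 :=
    (quadratic_eq_zero_iff hJ21 (s := δ) (by rw [discrim]; linear_combination -hδ) uP).mpr
      (Or.inl (by rw [huP]; ring))
  have horth : uM * κ₁ + (1 + uP * uM) * κb + uP * κ₂ = 0 :=
    eigenrows_orthogonal_of_current_symmetry hJ12 (hθ ▸ hsym) hroot
      (by rw [huM]; field_simp)
  rw [fin_two_mul_mul_transpose, one_fin_two]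
  congr 1
  simp only [vecCons_inj, and_true]
  refine ⟨⟨?_, ?_⟩, ?_, ?_⟩ <;> field_simp
  · linear_combination -hzP
  · linear_combination horth
  · linear_combination horth
  · linear_combination -hzM

theorem stmt_5 (J11 J12 J21 J22 κ₁ κ₂ κb θ δ uP uM zP zM : ℝ)
    (hκ₁ : 0 < κ₁) (hκ₂ : 0 < κ₂)
    (hsym : J21 * κ₁ - J12 * κ₂ = (J11 - J22) * κb)
    (hJ21 : J21 ≠ 0) (hJ12 : J12 ≠ 0)
    (hθ : θ = J11 - J22)
    (hdisc : 0 < θ^2 + 4 * J12 * J21)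
    (hδ : δ^2 = θ^2 + 4 * J12 * J21)
    (huP : uP = (δ - θ) / (2 * J21))
    (huM : uM = -(J21 / J12) * uP)
    (hzPpos : 0 < zP) (hzMpos : 0 < zM)
    (hzP : zP^2 = κ₁ + 2 * uP * κb + uP^2 * κ₂)
    (hzM : zM^2 = uM^2 * κ₁ + 2 * uM * κb + κ₂) :
    !![1/zP, uP/zP; uM/zM, 1/zM] * !![κ₁, κb; κb, κ₂] *
      (!![1/zP, uP/zP; uM/zM, 1/zM])ᵀ = 1 :=
  stmt_5_general J11 J12 J21 J22 κ₁ κ₂ κb θ δ uP uM zP zM hsym hJ21 hJ12 hθ hδ huP huM hzPpos hzMpos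
    hzP hzM
end

section
/- With the same definitions (Gᵞ = (1/2)Σ_λ R_{γλ}(R⁻¹)ᵀH^λR⁻¹, H^λ symmetric), all four diagonal mode-coupling elements are given in closed form: G¹₂₂ = (z₋²/(2v²z₊))[u₊²(H¹₁₁+u₊H²₁₁) − 2u₊(H¹₁₂+u₊H²₁₂) + H¹₂₂ + u₊H²₂₂], G²₁₁ = (z₊²/(2v²z₋))[u₋H¹₁₁+H²₁₁ − 2u₋(u₋H¹₁₂+H²₁₂) + u₋²(u₋H¹₂₂+H²₂₂)], and G²₂₂ = (z₋/(2v²))[u₊²(u₋H¹₁₁+H²₁₁) − 2u₊(u₋H¹₁₂+H²₁₂) + u₋H¹₂₂+H²₂₂]. -/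
/-!
Each diagonal entry `(R⁻¹ᵀ H R⁻¹)ⱼⱼ` is the quadratic form of the symmetric matrix `H` evaluated
at the `j`-th column of `R⁻¹`. Those columns are `(z₊/v) (1, -u₋)` and `(z₋/v) (-u₊, 1)`, so
each `Gᵞⱼⱼ` is a combination of two such quadratic forms with coefficients read off from `R`.
-/

open Matrix

lemma transpose_mul_mul_apply_self_fin_two {K : Type*} [CommRing K]
    {H : Matrix (Fin 2) (Fin 2) K} (hH : Hᵀ = H) (A : Matrix (Fin 2) (Fin 2) K) (j : Fin 2) :
    (Aᵀ * H * A) j j = H 0 0 * A 0 j ^ 2 + 2 * H 0 1 * A 0 j * A 1 j + H 1 1 * A 1 j ^ 2 := by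
  have hH10 : H 1 0 = H 0 1 := congrFun (congrFun hH 0) 1
  simp only [mul_apply, transpose_apply, Fin.sum_univ_two, hH10]
  ring

section InverseOfR

variable {K : Type*} [Field K] {H : Matrix (Fin 2) (Fin 2) K} (hH : Hᵀ = H) (uP uM v zP zM : K)
include hH

lemma transpose_smul_mul_mul_apply_zero_zero :
    ((v⁻¹ • !![zP, -zM * uP; -zP * uM, zM])ᵀ * H * (v⁻¹ • !![zP, -zM * uP; -zP * uM, zM])) 0 0 =
      zP ^ 2 / v ^ 2 * (H 0 0 - 2 * uM * H 0 1 + uM ^ 2 * H 1 1) := by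
  rw [transpose_mul_mul_apply_self_fin_two hH]
  simp only [Matrix.smul_apply, of_apply, cons_val', cons_val_zero, cons_val_one, empty_val',
    cons_val_fin_one, smul_eq_mul]
  ring

lemma transpose_smul_mul_mul_apply_one_one :
    ((v⁻¹ • !![zP, -zM * uP; -zP * uM, zM])ᵀ * H * (v⁻¹ • !![zP, -zM * uP; -zP * uM, zM])) 1 1 =
      zM ^ 2 / v ^ 2 * (uP ^ 2 * H 0 0 - 2 * uP * H 0 1 + H 1 1) := by
  rw [transpose_mul_mul_apply_self_fin_two hH]
  simp only [Matrix.smul_apply, of_apply, cons_val', cons_val_zero, cons_val_one, empty_val',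
    cons_val_fin_one, smul_eq_mul]
  ring

end InverseOfR

theorem stmt_10_general (uP uM v zP zM : ℝ) (H1 H2 : Matrix (Fin 2) (Fin 2) ℝ)
    (hH1 : H1ᵀ = H1) (hH2 : H2ᵀ = H2)
    (hzM : 0 < zM) :
    let R : Matrix (Fin 2) (Fin 2) ℝ := !![1/zP, uP/zP; uM/zM, 1/zM]
    let Rinv : Matrix (Fin 2) (Fin 2) ℝ := v⁻¹ • !![zP, -zM * uP; -zP * uM, zM]
    let G1 : Matrix (Fin 2) (Fin 2) ℝ :=
      (1/2 : ℝ) • (R 0 0 • (Rinvᵀ * H1 * Rinv) + R 0 1 • (Rinvᵀ * H2 * Rinv))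
    let G2 : Matrix (Fin 2) (Fin 2) ℝ :=
      (1/2 : ℝ) • (R 1 0 • (Rinvᵀ * H1 * Rinv) + R 1 1 • (Rinvᵀ * H2 * Rinv))
    (G1 1 1 = (zM^2 / (2 * v^2 * zP)) * (uP^2 * (H1 0 0 + uP * H2 0 0)
        - 2 * uP * (H1 0 1 + uP * H2 0 1) + H1 1 1 + uP * H2 1 1)) ∧
    (G2 0 0 = (zP^2 / (2 * v^2 * zM)) * (uM * H1 0 0 + H2 0 0
        - 2 * uM * (uM * H1 0 1 + H2 0 1)
        + uM^2 * (uM * H1 1 1 + H2 1 1))) ∧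
    (G2 1 1 = (zM / (2 * v^2)) * (uP^2 * (uM * H1 0 0 + H2 0 0)
        - 2 * uP * (uM * H1 0 1 + H2 0 1) + uM * H1 1 1 + H2 1 1)) := by
  intro R Rinv G1 G2
  have hR : R 0 0 = 1 / zP ∧ R 0 1 = uP / zP ∧ R 1 0 = uM / zM ∧ R 1 1 = 1 / zM :=
    ⟨rfl, rfl, rfl, rfl⟩
  simp only [G1, G2, Rinv, Matrix.add_apply, Matrix.smul_apply, smul_eq_mul, hR,
    transpose_smul_mul_mul_apply_zero_zero hH1, transpose_smul_mul_mul_apply_zero_zero hH2,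
    transpose_smul_mul_mul_apply_one_one hH1, transpose_smul_mul_mul_apply_one_one hH2]
  refine ⟨by ring, by ring, ?_⟩
  field_simp
  ring

theorem stmt_10 (uP uM v zP zM : ℝ) (H1 H2 : Matrix (Fin 2) (Fin 2) ℝ)
    (hH1 : H1ᵀ = H1) (hH2 : H2ᵀ = H2)
    (hv : v = 1 - uP * uM) (hv0 : v ≠ 0)
    (hzP : 0 < zP) (hzM : 0 < zM) :
    let R : Matrix (Fin 2) (Fin 2) ℝ := !![1/zP, uP/zP; uM/zM, 1/zM]
    let Rinv : Matrix (Fin 2) (Fin 2) ℝ := v⁻¹ • !![zP, -zM * uP; -zP * uM, zM]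
    let G1 : Matrix (Fin 2) (Fin 2) ℝ :=
      (1/2 : ℝ) • (R 0 0 • (Rinvᵀ * H1 * Rinv) + R 0 1 • (Rinvᵀ * H2 * Rinv))
    let G2 : Matrix (Fin 2) (Fin 2) ℝ :=
      (1/2 : ℝ) • (R 1 0 • (Rinvᵀ * H1 * Rinv) + R 1 1 • (Rinvᵀ * H2 * Rinv))
    (G1 1 1 = (zM^2 / (2 * v^2 * zP)) * (uP^2 * (H1 0 0 + uP * H2 0 0)
        - 2 * uP * (H1 0 1 + uP * H2 0 1) + H1 1 1 + uP * H2 1 1)) ∧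
    (G2 0 0 = (zP^2 / (2 * v^2 * zM)) * (uM * H1 0 0 + H2 0 0
        - 2 * uM * (uM * H1 0 1 + H2 0 1)
        + uM^2 * (uM * H1 1 1 + H2 1 1))) ∧
    (G2 1 1 = (zM / (2 * v^2)) * (uP^2 * (uM * H1 0 0 + H2 0 0)
        - 2 * uP * (uM * H1 0 1 + H2 0 1) + uM * H1 1 1 + H2 1 1)) :=
  stmt_10_general uP uM v zP zM H1 H2 hH1 hH2 hzM
end

section
/- Antisymmetric case: suppose the Hessians satisfy H²₁₁ = −H¹₂₂, H²₁₂ = −H¹₁₂, H²₂₂ = −H¹₁₁, and the Jacobian satisfies u₋ = u₊ (arising from ω = J₁₂/J₂₁ = −1). Then the diagonal mode-coupling elements from the closed-form expressions satisfy G²₂₂ = −(z₋/z₊)·G¹₁₁ and G²₁₁ = −(z₊/z₋)³·G¹₂₂. -/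
theorem stmt_13 (uP uM v zP zM H111 H112 H122 H211 H212 H222 : ℝ)
    (hu : uM = uP)
    (hH211 : H211 = -H122) (hH212 : H212 = -H112) (hH222 : H222 = -H111)
    (hv : v = 1 - uP * uM) (hv0 : v ≠ 0)
    (hzP : 0 < zP) (hzM : 0 < zM) :
    let G111 : ℝ := zP / (2 * v^2) * (H111 + uP * H211
      - 2 * uM * (H112 + uP * H212) + uM^2 * (H122 + uP * H222))
    let G122 : ℝ := zM^2 / (2 * v^2 * zP) * (uP^2 * (H111 + uP * H211)
      - 2 * uP * (H112 + uP * H212) + H122 + uP * H222)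
    let G211 : ℝ := zP^2 / (2 * v^2 * zM) * (uM * H111 + H211
      - 2 * uM * (uM * H112 + H212) + uM^2 * (uM * H122 + H222))
    let G222 : ℝ := zM / (2 * v^2) * (uP^2 * (uM * H111 + H211)
      - 2 * uP * (uM * H112 + H212) + uM * H122 + H222)
    G222 = -(zM / zP) * G111 ∧ G211 = -(zP / zM)^3 * G122 := by
  intro G111 G122 G211 G222
  subst hu hH211 hH212 hH222 hv
  constructor <;> simp only [G111, G122, G211, G222] <;>
    field_simp <;> ring
end

section
/- Antisymmetric case, golden-mode criterion: with H²ᵢⱼ determined by H²₁₁ = −H¹₂₂, H²₁₂ = −H¹₁₂, H²₂₂ = −H¹₁₁ and u₋ = u₊ with u₊ ≠ 1, v = 1−u₊² ≠ 0, z± > 0, the self-coupling coefficients G¹₁₁ and G²₂₂ both vanish if and only if u₊(H¹₂₂ + 2H¹₁₂) = (1 + u₊ + u₊²)H¹₁₁; and under this condition the cross-couplings G¹₂₂ and G²₁₁ are both nonzero if and only if H¹₁₁ ≠ H¹₂₂. -/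
theorem stmt_14 (uP v zP zM H111 H112 H122 : ℝ)
    (hu0 : uP ≠ 0) (hu1 : uP ≠ 1)
    (hv : v = 1 - uP^2) (hv0 : v ≠ 0)
    (hzP : 0 < zP) (hzM : 0 < zM) :
    let G111 : ℝ := uP * zP / (2 * v^2) * (uP⁻¹ * (1 - uP^3) * H111
      - 2 * (1 - uP) * H112 - (1 - uP) * H122)
    let G122 : ℝ := uP * zM^2 / (2 * v^2 * zP) * (-(1 - uP) * H111
      - 2 * (1 - uP) * H112 + uP⁻¹ * (1 - uP^3) * H122)
    let G211 : ℝ := -(zP / zM)^3 * G122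
    let G222 : ℝ := -(zM / zP) * G111
    ((G111 = 0 ∧ G222 = 0) ↔ uP * (H122 + 2 * H112) = (1 + uP + uP^2) * H111) ∧
    (uP * (H122 + 2 * H112) = (1 + uP + uP^2) * H111 →
      ((G122 ≠ 0 ∧ G211 ≠ 0) ↔ H111 ≠ H122)) := by
  intro G111 G122 G211 G222
  have h1u : (1:ℝ) - uP ≠ 0 := sub_ne_zero.mpr (Ne.symm hu1)
  have h1u' : (1:ℝ) + uP ≠ 0 := by
    intro h
    apply hv0
    rw [hv]
    nlinarith [h]
  have hzP' : zP ≠ 0 := hzP.ne'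
  have hzM' : zM ≠ 0 := hzM.ne'
  have e1 : G111 = (zP * (1 - uP) / (2 * v^2)) *
      ((1 + uP + uP^2) * H111 - uP * (H122 + 2 * H112)) := by
    show uP * zP / (2 * v^2) * _ = _
    field_simp
    ring
  have e2 : G122 = (zM^2 * (1 - uP) / (2 * v^2 * zP)) *
      ((1 + uP + uP^2) * H122 - uP * (H111 + 2 * H112)) := by
    show uP * zM^2 / (2 * v^2 * zP) * _ = _
    field_simp
    ring
  have c1 : zP * (1 - uP) / (2 * v^2) ≠ 0 :=
    div_ne_zero (mul_ne_zero hzP' h1u) (by positivity)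
  have c2 : zM^2 * (1 - uP) / (2 * v^2 * zP) ≠ 0 :=
    div_ne_zero (mul_ne_zero (pow_ne_zero 2 hzM') h1u)
      (mul_ne_zero (by positivity) hzP')
  constructor
  · constructor
    · rintro ⟨hA, -⟩
      rw [e1] at hA
      rcases mul_eq_zero.mp hA with h | h
      · exact absurd h c1
      · linarith
    · intro h
      have hf : (1 + uP + uP^2) * H111 - uP * (H122 + 2 * H112) = 0 := by linarith
      have hG : G111 = 0 := by rw [e1, hf, mul_zero]
      refine ⟨hG, ?_⟩
      show -(zM / zP) * G111 = 0
      rw [hG, mul_zero]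
  · intro hcond
    have hf2 : (1 + uP + uP^2) * H122 - uP * (H111 + 2 * H112)
        = (1 + uP)^2 * (H122 - H111) := by linear_combination -hcond
    have e2' : G122 = (zM^2 * (1 - uP) / (2 * v^2 * zP)) * ((1 + uP)^2 * (H122 - H111)) := by
      rw [e2, hf2]
    have key : G122 ≠ 0 ↔ H111 ≠ H122 := by
      rw [e2']
      constructor
      · intro h heq
        apply h
        rw [heq]
        ring
      · intro h
        exact mul_ne_zero c2 (mul_ne_zero (pow_ne_zero 2 h1u')
          (sub_ne_zero.mpr (Ne.symm h)))
    constructor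
    · rintro ⟨h, -⟩
      exact key.mp h
    · intro h
      refine ⟨key.mpr h, ?_⟩
      show -(zP / zM)^3 * G122 ≠ 0
      exact mul_ne_zero (neg_ne_zero.mpr (pow_ne_zero 3 (div_ne_zero hzP' hzM'))) (key.mpr h)
end

section
/- Two-lane TASEP with cross-enhanced rates (case i): suppose j¹(ρ₁,ρ₂) = j₀(ρ₁)(1+2b₁ρ₂) and j²(ρ₁,ρ₂) = j₀(ρ₂)(1+2b₂ρ₁) with b₁, b₂ ≠ 0, and the current symmetry b₂ j₀(ρ₂) ρ₁(1−ρ₁) = b₁ j₀(ρ₁) ρ₂(1−ρ₂) holds for all ρ₁, ρ₂ ∈ (0,1), where j₀ : (0,1) → ℝ is continuous and not identically zero. Then b₁ = b₂ and there exists a constant c ≠ 0 with j₀(x) = c·x(1−x) for all x ∈ (0,1). -/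
/-! The symmetry relation at `ρ₁ = ρ₂ = x₀`, for a point where `j₀ x₀ ≠ 0`, forces `b₁ = b₂`.
After cancelling `b₁ = b₂`, fixing `ρ₂ = x₀` separates the variables: `j₀ ρ / (ρ (1 - ρ))` is
constant. -/

lemma mul_one_sub_ne_zero_of_mem_Ioo {x : ℝ} (hx : x ∈ Set.Ioo (0 : ℝ) 1) : x * (1 - x) ≠ 0 :=
  mul_ne_zero hx.1.ne' (sub_ne_zero.mpr hx.2.ne')

lemma eq_div_mul_of_mul_eq_mul {α K : Type*} [Field K] {f g : α → K} {s : Set α} {x₀ : α}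
    (hg : g x₀ ≠ 0) (hcross : ∀ x ∈ s, f x * g x₀ = f x₀ * g x) :
    ∀ x ∈ s, f x = f x₀ / g x₀ * g x := by
  intro x hx
  rw [div_mul_eq_mul_div, eq_div_iff hg]
  exact hcross x hx

theorem stmt_16_general (j₀ : ℝ → ℝ) (b₁ b₂ : ℝ)
    (hb₂ : b₂ ≠ 0)
    (hne : ∃ x ∈ Set.Ioo (0:ℝ) 1, j₀ x ≠ 0)
    (hsym : ∀ ρ₁ ∈ Set.Ioo (0:ℝ) 1, ∀ ρ₂ ∈ Set.Ioo (0:ℝ) 1,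
      b₂ * j₀ ρ₂ * (ρ₁ * (1 - ρ₁)) = b₁ * j₀ ρ₁ * (ρ₂ * (1 - ρ₂))) :
    b₁ = b₂ ∧ ∃ c : ℝ, c ≠ 0 ∧ ∀ x ∈ Set.Ioo (0:ℝ) 1, j₀ x = c * x * (1 - x) := by
  obtain ⟨x₀, hx₀, hj₀⟩ := hne
  have hκ₀ := mul_one_sub_ne_zero_of_mem_Ioo hx₀
  have hb : b₁ = b₂ := by
    have h := hsym x₀ hx₀ x₀ hx₀
    rw [mul_assoc, mul_assoc] at h
    exact (mul_right_cancel₀ (mul_ne_zero hj₀ hκ₀) h).symm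
  have hcross : ∀ x ∈ Set.Ioo (0:ℝ) 1, j₀ x * (x₀ * (1 - x₀)) = j₀ x₀ * (x * (1 - x)) := by
    intro x hx
    have h := hsym x₀ hx₀ x hx
    rw [hb, mul_assoc, mul_assoc] at h
    exact mul_left_cancel₀ hb₂ h
  refine ⟨hb, j₀ x₀ / (x₀ * (1 - x₀)), div_ne_zero hj₀ hκ₀, fun x hx => ?_⟩
  rw [mul_assoc]
  exact eq_div_mul_of_mul_eq_mul (g := fun x => x * (1 - x)) hκ₀ hcross x hx

theorem stmt_16 (j₀ : ℝ → ℝ) (b₁ b₂ : ℝ)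
    (hb₁ : b₁ ≠ 0) (hb₂ : b₂ ≠ 0)
    (hcont : ContinuousOn j₀ (Set.Ioo 0 1))
    (hne : ∃ x ∈ Set.Ioo (0:ℝ) 1, j₀ x ≠ 0)
    (hsym : ∀ ρ₁ ∈ Set.Ioo (0:ℝ) 1, ∀ ρ₂ ∈ Set.Ioo (0:ℝ) 1,
      b₂ * j₀ ρ₂ * (ρ₁ * (1 - ρ₁)) = b₁ * j₀ ρ₁ * (ρ₂ * (1 - ρ₂))) :
    b₁ = b₂ ∧ ∃ c : ℝ, c ≠ 0 ∧ ∀ x ∈ Set.Ioo (0:ℝ) 1, j₀ x = c * x * (1 - x) :=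
  stmt_16_general j₀ b₁ b₂ hb₂ hne hsym
end
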